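/- Let n ≥ 0. Assume every boldface Σ¹_{n+2} subset of Cantor space 2^ω has the perfect set property, let R ⊆ 2^ω × 2^ω be a boldface Σ¹_{n+2} set which is the graph of a well-ordering ≤* of its field X ⊆ 2^ω, and let P ⊆ X be a perfect set. Let P₀ ⊆ 2^ω be a perfect set, let f₀ : P₀ → P be a continuous injection, and let h, h* : P₀ → P be continuous bijections with h(x) ≠ h*(x) for all x ∈ P₀. Then at least one of the sets A = {x ∈ P₀ : h(x) <* f₀(x)} and A* = {x ∈ P₀ : h*(x) <* f₀(x)} has a perfect subset. -/

import Mathlib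

namespace GaleStewart

/-- Baire space `ℕ^ω`. -/
abbrev Baire : Type := ℕ → ℕ

/-- Cantor space `2^ω`. -/
abbrev Cantor : Type := ℕ → Bool

/-- A strategy: given the finite sequence of moves made so far, produce the next move. -/
abbrev Strategy : Type := List ℕ → ℕ

/-- The infinite play `x` is consistent with `σ` viewed as a strategy for player I,
who plays the moves `x (2*k)` on the basis of the position of length `2*k`. -/
def PlayIsI (σ : Strategy) (x : Baire) : Prop :=
  ∀ k : ℕ, x (2 * k) = σ (List.ofFn fun i : Fin (2 * k) => x i.val)

/-- The infinite play `x` is consistent with `τ` viewed as a strategy for player II,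
who plays the moves `x (2*k+1)` on the basis of the position of length `2*k+1`. -/
def PlayIsII (τ : Strategy) (x : Baire) : Prop :=
  ∀ k : ℕ, x (2 * k + 1) = τ (List.ofFn fun i : Fin (2 * k + 1) => x i.val)

/-- The Gale–Stewart game with payoff set `A ⊆ ℕ^ω` is determined: player I has a
winning strategy (every play following it lies in `A`), or player II has a winning
strategy (every play following it lies outside `A`). -/
def Determined (A : Set Baire) : Prop :=
  (∃ σ : Strategy, ∀ x : Baire, PlayIsI σ x → x ∈ A) ∨
    (∃ τ : Strategy, ∀ x : Baire, PlayIsII τ x → x ∉ A)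

/-- Boldface `Π¹ₙ` subsets of a topological space, where `Π¹₀` means closed, and a set
is `Π¹ₙ₊₁` iff its complement is the projection along a Baire-space coordinate of a
`Π¹ₙ` set.  (So `Σ¹₁` = projections of closed sets, `Π¹ₙ` = complements of `Σ¹ₙ`,
`Σ¹ₙ₊₁` = projections of `Π¹ₙ` sets.) -/
def boldfacePiAux : ℕ → (X : Type) → TopologicalSpace X → Set X → Prop
  | 0, _X, tX, A => letI := tX; IsClosed A
  | n + 1, X, tX, A =>
      letI := tX
      ∃ B : Set (X × Baire),
        boldfacePiAux n (X × Baire) inferInstance B ∧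
          Aᶜ = {x | ∃ y : Baire, (x, y) ∈ B}

/-- The boldface pointclass `Π¹ₙ`. -/
def BoldfacePi (n : ℕ) (X : Type) [tX : TopologicalSpace X] (A : Set X) : Prop :=
  boldfacePiAux n X tX A

/-- The boldface pointclass `Σ¹ₙ` (meaningful for `n ≥ 1`): projections along a
Baire-space coordinate of `Π¹ₙ₋₁` sets. -/
def BoldfaceSigma (n : ℕ) (X : Type) [tX : TopologicalSpace X] (A : Set X) : Prop :=
  ∃ B : Set (X × Baire),
    boldfacePiAux (n - 1) (X × Baire) inferInstance B ∧
      A = {x | ∃ y : Baire, (x, y) ∈ B}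

/-- The field of a relation `R ⊆ 2^ω × 2^ω`. -/
def fieldOf (R : Set (Cantor × Cantor)) : Set Cantor :=
  {y | ∃ x, (x, y) ∈ R ∨ (y, x) ∈ R}

/-- `R ⊆ 2^ω × 2^ω` is the graph of a well-ordering of its field: on the field,
`R` is reflexive, antisymmetric, transitive, total, and every nonempty subset of
the field has an `R`-least element. -/
def IsWellOrderingGraph (R : Set (Cantor × Cantor)) : Prop :=
  (∀ x ∈ fieldOf R, (x, x) ∈ R) ∧
  (∀ x y, (x, y) ∈ R → (y, x) ∈ R → x = y) ∧
  (∀ x y z, (x, y) ∈ R → (y, z) ∈ R → (x, z) ∈ R) ∧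
  (∀ x ∈ fieldOf R, ∀ y ∈ fieldOf R, (x, y) ∈ R ∨ (y, x) ∈ R) ∧
  (∀ S : Set Cantor, S ⊆ fieldOf R → S.Nonempty → ∃ m ∈ S, ∀ y ∈ S, (m, y) ∈ R)

/-- A perfect subset of Cantor space: nonempty, closed, and without isolated points. -/
def IsPerfectSet (P : Set Cantor) : Prop :=
  P.Nonempty ∧ Perfect P

/-- The perfect set property for `A ⊆ 2^ω`: `A` is countable or has a perfect subset. -/
def PerfectSetProperty (A : Set Cantor) : Prop :=
  A.Countable ∨ ∃ P : Set Cantor, P ⊆ A ∧ IsPerfectSet P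


/-! ### Auxiliary machinery -/

section Auxiliary

open Set Function Metric TopologicalSpace

open Classical in
private lemma cantor_uncountable : ¬ Countable (ℕ → Bool) := by
  intro hc
  have h1 : Function.Injective (fun (s : Set ℕ) => (fun n => decide (n ∈ s) : ℕ → Bool)) := by
    intro s t hst
    ext n
    have := congrFun hst n
    simpa [decide_eq_decide] using this
  haveI hcs : Countable (Set ℕ) := Countable.of_equiv _ (Equiv.ofInjective _ h1).symm
  obtain ⟨f, hf⟩ := Countable.exists_injective_nat (Set ℕ)
  exact Function.cantor_injective f hf

private lemma pi_preimage : ∀ (n : ℕ) {X Y : Type} [tX : TopologicalSpace X]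
    [tY : TopologicalSpace Y] (f : X → Y), Continuous f → ∀ (A : Set Y),
    boldfacePiAux n Y tY A → boldfacePiAux n X tX (f ⁻¹' A)
  | 0, X, Y, tX, tY, f, hf, A, h => h.preimage hf
  | (n+1), X, Y, tX, tY, f, hf, A, h => by
    obtain ⟨B, hB, hproj⟩ := h
    refine ⟨Prod.map f id ⁻¹' B,
      pi_preimage n (Prod.map f id) (hf.prodMap continuous_id) B hB, ?_⟩
    ext x
    simp only [mem_compl_iff, mem_preimage, mem_setOf_eq]
    constructor
    · intro hx
      have : f x ∈ Aᶜ := hx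
      rw [hproj] at this
      obtain ⟨y, hy⟩ := this
      exact ⟨y, hy⟩
    · rintro ⟨y, hy⟩ hfx
      have : f x ∈ Aᶜ := by rw [hproj]; exact ⟨y, hy⟩
      exact this hfx

/-- interleaving: even part, odd part -/
private def evp (y : Baire) : Baire := fun i => y (2 * i)
private def odp (y : Baire) : Baire := fun i => y (2 * i + 1)
private def mix (y z : Baire) : Baire := fun n => if n % 2 = 0 then y (n / 2) else z (n / 2)

private lemma evp_mix (y z : Baire) : evp (mix y z) = y := by
  funext i; simp only [evp, mix]
  rw [if_pos (by omega)]
  congr 1; omega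

private lemma odp_mix (y z : Baire) : odp (mix y z) = z := by
  funext i; simp only [odp, mix]
  rw [if_neg (by omega)]
  congr 1; omega

private lemma continuous_evp : Continuous evp :=
  continuous_pi fun i => continuous_apply (2 * i)

private lemma continuous_odp : Continuous odp :=
  continuous_pi fun i => continuous_apply (2 * i + 1)

private lemma pi_inter_union : ∀ (n : ℕ) {X : Type} [tX : TopologicalSpace X] (A B : Set X),
    (boldfacePiAux n X tX A → boldfacePiAux n X tX B → boldfacePiAux n X tX (A ∩ B)) ∧
    (boldfacePiAux n X tX A → boldfacePiAux n X tX B → boldfacePiAux n X tX (A ∪ B))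
  | 0, X, tX, A, B => ⟨fun hA hB => hA.inter hB, fun hA hB => hA.union hB⟩
  | (n+1), X, tX, A, B => by
    constructor
    · rintro ⟨C, hC, hCp⟩ ⟨D, hD, hDp⟩
      refine ⟨C ∪ D, (pi_inter_union n C D).2 hC hD, ?_⟩
      rw [compl_inter, hCp, hDp]
      ext x; simp only [mem_union, mem_setOf_eq, exists_or]
    · rintro ⟨C, hC, hCp⟩ ⟨D, hD, hDp⟩
      set g : X × Baire → X × Baire := fun p => (p.1, evp p.2) with hg
      set g' : X × Baire → X × Baire := fun p => (p.1, odp p.2) with hg'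
      have hgc : Continuous g := continuous_fst.prodMk (continuous_evp.comp continuous_snd)
      have hg'c : Continuous g' := continuous_fst.prodMk (continuous_odp.comp continuous_snd)
      refine ⟨g ⁻¹' C ∩ g' ⁻¹' D,
        (pi_inter_union n _ _).1 (pi_preimage n g hgc C hC) (pi_preimage n g' hg'c D hD), ?_⟩
      rw [compl_union, hCp, hDp]
      ext x
      simp only [mem_inter_iff, mem_setOf_eq, mem_preimage, hg, hg']
      constructor
      · rintro ⟨⟨y, hy⟩, ⟨z, hz⟩⟩
        exact ⟨mix y z, by rwa [evp_mix], by rwa [odp_mix]⟩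
      · rintro ⟨w, h1, h2⟩
        exact ⟨⟨evp w, h1⟩, ⟨odp w, h2⟩⟩

private lemma pi_inter (n : ℕ) {X : Type} [tX : TopologicalSpace X] (A B : Set X)
    (hA : boldfacePiAux n X tX A) (hB : boldfacePiAux n X tX B) :
    boldfacePiAux n X tX (A ∩ B) :=
  (pi_inter_union n A B).1 hA hB

private lemma pi_mono : ∀ (n : ℕ) {X : Type} [tX : TopologicalSpace X]
    [PseudoMetrizableSpace X] (A : Set X),
    boldfacePiAux n X tX A → boldfacePiAux (n+1) X tX A
  | 0, X, tX, hm, A, hA => by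
    rcases eq_empty_or_nonempty A with rfl | hne
    · refine ⟨univ, isClosed_univ, ?_⟩
      ext x
      simp only [compl_empty, mem_univ, mem_setOf_eq, true_iff]
      exact ⟨fun _ => 0, trivial⟩
    · letI := pseudoMetrizableSpacePseudoMetric X
      refine ⟨{p : X × Baire | 1 / ((p.2 0 : ℝ) + 1) ≤ infDist p.1 A}, ?_, ?_⟩
      · have hc1 : Continuous fun p : X × Baire => (1 / ((p.2 0 : ℝ) + 1)) := by
          have : Continuous fun p : X × Baire => p.2 0 := (continuous_apply 0).comp continuous_snd
          exact (continuous_of_discreteTopology (f := fun n : ℕ => 1 / ((n:ℝ)+1))).comp this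
        have hc2 : Continuous fun p : X × Baire => infDist p.1 A :=
          (continuous_infDist_pt A).comp continuous_fst
        exact isClosed_le hc1 hc2
      · ext x
        simp only [mem_compl_iff, mem_setOf_eq]
        constructor
        · intro hx
          have hd : 0 < infDist x A := by
            rcases lt_or_eq_of_le (infDist_nonneg (s := A) (x := x)) with h | h
            · exact h
            · exact absurd ((hA.mem_iff_infDist_zero hne).2 h.symm) hx
          obtain ⟨k, hk⟩ := exists_nat_one_div_lt hd
          exact ⟨fun _ => k, le_of_lt hk⟩
        · rintro ⟨y, hy⟩ hxA
          have : infDist x A = 0 := infDist_zero_of_mem hxA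
          rw [this] at hy
          have : (0:ℝ) < 1 / ((y 0 : ℝ) + 1) := by positivity
          linarith
  | (n+1), X, tX, hm, A, hA => by
    obtain ⟨B, hB, hproj⟩ := hA
    exact ⟨B, pi_mono n B hB, hproj⟩

private lemma pi_of_closed (n : ℕ) {X : Type} [tX : TopologicalSpace X]
    [PseudoMetrizableSpace X] {A : Set X} (hA : IsClosed A) : boldfacePiAux n X tX A := by
  induction n with
  | zero => exact hA
  | succ n ih => exact pi_mono n A ih

private lemma pi_of_open (n : ℕ) {X : Type} [tX : TopologicalSpace X]
    [PseudoMetrizableSpace X] {U : Set X} (hU : IsOpen U) : boldfacePiAux (n+1) X tX U := by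
  induction n with
  | zero =>
    refine ⟨Uᶜ ×ˢ (univ : Set Baire), (hU.isClosed_compl).prod isClosed_univ, ?_⟩
    ext x
    simp only [mem_compl_iff, mem_setOf_eq, mem_prod, mem_univ, and_true]
    exact ⟨fun h => ⟨fun _ => 0, h⟩, fun ⟨y, hy⟩ => hy⟩
  | succ n ih => exact pi_mono (n+1) U ih

private lemma sigma_preimage {k : ℕ} {X Y : Type} [tX : TopologicalSpace X]
    [tY : TopologicalSpace Y] (f : X → Y) (hf : Continuous f) (A : Set Y)
    (hA : BoldfaceSigma (k+1) Y A) : BoldfaceSigma (k+1) X (f ⁻¹' A) := by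
  obtain ⟨B, hB, hproj⟩ := hA
  refine ⟨Prod.map f id ⁻¹' B, pi_preimage k (Prod.map f id) (hf.prodMap continuous_id) B hB, ?_⟩
  ext x
  simp only [mem_preimage, hproj, mem_setOf_eq]
  rfl

private lemma sigma_inter_pi {k : ℕ} {X : Type} [tX : TopologicalSpace X]
    (A M : Set X) (hA : BoldfaceSigma (k+1) X A) (hM : boldfacePiAux k X tX M) :
    BoldfaceSigma (k+1) X (A ∩ M) := by
  obtain ⟨B, hB, hproj⟩ := hA
  refine ⟨B ∩ (Prod.fst ⁻¹' M), pi_inter k _ _ hB (pi_preimage k Prod.fst continuous_fst M hM), ?_⟩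
  ext x
  simp only [mem_inter_iff, hproj, mem_setOf_eq, mem_preimage]
  constructor
  · rintro ⟨⟨y, hy⟩, hm⟩; exact ⟨y, hy, hm⟩
  · rintro ⟨y, hy, hm⟩; exact ⟨⟨y, hy⟩, hm⟩

private lemma sigma_exists {k : ℕ} {X : Type} [tX : TopologicalSpace X]
    (S : Set (X × Baire)) (hS : BoldfaceSigma (k+1) (X × Baire) S) :
    BoldfaceSigma (k+1) X {x | ∃ y : Baire, (x, y) ∈ S} := by
  obtain ⟨B, hB, hproj⟩ := hS
  set r : X × Baire → (X × Baire) × Baire := fun p => ((p.1, evp p.2), odp p.2) with hr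
  have hrc : Continuous r :=
    (continuous_fst.prodMk (continuous_evp.comp continuous_snd)).prodMk
      (continuous_odp.comp continuous_snd)
  refine ⟨r ⁻¹' B, pi_preimage k r hrc B hB, ?_⟩
  ext x
  simp only [mem_setOf_eq, mem_preimage, hr]
  constructor
  · rintro ⟨y, hy⟩
    rw [hproj] at hy
    obtain ⟨z, hz⟩ := hy
    exact ⟨mix y z, by rwa [evp_mix, odp_mix]⟩
  · rintro ⟨w, hw⟩
    refine ⟨evp w, ?_⟩
    rw [hproj]
    exact ⟨odp w, hw⟩

/-- decoding two Cantor points from one Baire point -/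
private def dec1 (y : Baire) : Cantor := fun i => decide (y (2 * i) ≠ 0)
private def dec2 (y : Baire) : Cantor := fun i => decide (y (2 * i + 1) ≠ 0)
private def enc (a b : Cantor) : Baire :=
  fun n => if n % 2 = 0 then (bif a (n / 2) then 1 else 0) else (bif b (n / 2) then 1 else 0)

private lemma continuous_dec1 : Continuous dec1 :=
  continuous_pi fun i =>
    (continuous_of_discreteTopology (f := fun m : ℕ => decide (m ≠ 0))).comp
      (continuous_apply (2 * i))

private lemma continuous_dec2 : Continuous dec2 :=
  continuous_pi fun i =>
    (continuous_of_discreteTopology (f := fun m : ℕ => decide (m ≠ 0))).comp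
      (continuous_apply (2 * i + 1))

private lemma dec1_enc (a b : Cantor) : dec1 (enc a b) = a := by
  funext i
  have h2 : 2 * i % 2 = 0 := by omega
  have h3 : 2 * i / 2 = i := by omega
  simp only [dec1, enc, h2, if_true, h3, reduceIte]
  cases a i <;> simp

private lemma dec2_enc (a b : Cantor) : dec2 (enc a b) = b := by
  funext i
  have h2 : (2 * i + 1) % 2 = 1 := by omega
  have h3 : (2 * i + 1) / 2 = i := by omega
  simp only [dec2, enc, h2, h3, reduceIte]
  cases b i <;> simp

private lemma graph_closed {P₀ : Set Cantor} (hP₀c : IsClosed P₀) {g : Cantor → Cantor}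
    (hg : ContinuousOn g P₀) : IsClosed ((fun x => (x, g x)) '' P₀) := by
  have hcpt : IsCompact P₀ := hP₀c.isCompact
  have : IsCompact ((fun x => (x, g x)) '' P₀) :=
    hcpt.image_of_continuousOn (continuousOn_id.prodMk hg)
  exact this.isClosed

private lemma A_sigma (n : ℕ) (R : Set (Cantor × Cantor))
    (hR : BoldfaceSigma (n+2) (Cantor × Cantor) R)
    (P₀ : Set Cantor) (hP₀c : IsClosed P₀) (g g' : Cantor → Cantor)
    (hg : ContinuousOn g P₀) (hg' : ContinuousOn g' P₀) :
    BoldfaceSigma (n+2) Cantor {x ∈ P₀ | (g x, g' x) ∈ R ∧ g x ≠ g' x} := by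
  classical
  have hU : IsOpen {p : Cantor × Cantor | p.1 ≠ p.2} := isOpen_ne_fun continuous_fst continuous_snd
  have hR' : BoldfaceSigma (n+2) (Cantor × Cantor) (R ∩ {p | p.1 ≠ p.2}) :=
    sigma_inter_pi (k := n+1) R _ hR (pi_of_open n hU)
  set q : Cantor × Baire → Cantor × Cantor := fun p => (dec1 p.2, dec2 p.2) with hq
  have hqc : Continuous q :=
    (continuous_dec1.comp continuous_snd).prodMk (continuous_dec2.comp continuous_snd)
  have hS1 : BoldfaceSigma (n+2) (Cantor × Baire) (q ⁻¹' (R ∩ {p | p.1 ≠ p.2})) :=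
    sigma_preimage (k := n+1) q hqc _ hR'
  set Hg := (fun x => (x, g x)) '' P₀ with hHg
  set Hg' := (fun x => (x, g' x)) '' P₀ with hHg'
  have hHgc : IsClosed Hg := graph_closed hP₀c hg
  have hHg'c : IsClosed Hg' := graph_closed hP₀c hg'
  set G : Set (Cantor × Baire) :=
    {p | (p.1, dec1 p.2) ∈ Hg ∧ (p.1, dec2 p.2) ∈ Hg'} with hG
  have hGc : IsClosed G := by
    have c1 : Continuous fun p : Cantor × Baire => (p.1, dec1 p.2) :=
      continuous_fst.prodMk (continuous_dec1.comp continuous_snd)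
    have c2 : Continuous fun p : Cantor × Baire => (p.1, dec2 p.2) :=
      continuous_fst.prodMk (continuous_dec2.comp continuous_snd)
    exact (hHgc.preimage c1).inter (hHg'c.preimage c2)
  set T := q ⁻¹' (R ∩ {p : Cantor × Cantor | p.1 ≠ p.2}) ∩ G with hT
  have hTs : BoldfaceSigma (n+2) (Cantor × Baire) T :=
    sigma_inter_pi (k := n+1) _ G hS1 (pi_of_closed (n+1) hGc)
  have key : {x ∈ P₀ | (g x, g' x) ∈ R ∧ g x ≠ g' x} = {x | ∃ y : Baire, (x, y) ∈ T} := by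
    ext x
    simp only [mem_setOf_eq, hT, mem_inter_iff, mem_preimage, hq, hG]
    constructor
    · rintro ⟨hxP, hxR, hxne⟩
      refine ⟨enc (g x) (g' x), ?_, ?_, ?_⟩
      · rw [dec1_enc, dec2_enc]; exact ⟨hxR, hxne⟩
      · rw [dec1_enc]; exact ⟨x, hxP, rfl⟩
      · rw [dec2_enc]; exact ⟨x, hxP, rfl⟩
    · rintro ⟨y, ⟨hyR, hyne⟩, ⟨x1, hx1, hx1e⟩, ⟨x2, hx2, hx2e⟩⟩
      have e1a : x1 = x := congrArg Prod.fst hx1e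
      have e1b : g x1 = dec1 y := congrArg Prod.snd hx1e
      have e2a : x2 = x := congrArg Prod.fst hx2e
      have e2b : g' x2 = dec2 y := congrArg Prod.snd hx2e
      subst e1a
      subst e2a
      exact ⟨hx1, by rw [e1b, e2b]; exact hyR, by rw [e1b, e2b]; exact hyne⟩
  rw [key]
  exact sigma_exists (k := n+1) T hTs

end Auxiliary

/-- Under the perfect set property for boldface `Σ¹ₙ₊₂` subsets of
Cantor space, with `R` a boldface `Σ¹ₙ₊₂` graph of a well-ordering of its field `X`,
`P ⊆ X` perfect, `P₀` perfect, `f₀ : P₀ → P` a continuous injection, and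
`h, h* : P₀ → P` continuous bijections with `h(x) ≠ h*(x)` on `P₀`: at least one of
`A = {x ∈ P₀ : h(x) <* f₀(x)}` and `A* = {x ∈ P₀ : h*(x) <* f₀(x)}` has a perfect
subset. -/
theorem perfect_subset_of_A_or_Astar (n : ℕ)
    (hpsp : ∀ A : Set Cantor, BoldfaceSigma (n + 2) Cantor A → PerfectSetProperty A)
    (R : Set (Cantor × Cantor))
    (hR : BoldfaceSigma (n + 2) (Cantor × Cantor) R)
    (hwo : IsWellOrderingGraph R)
    (P : Set Cantor) (hPsub : P ⊆ fieldOf R) (hP : IsPerfectSet P)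
    (P₀ : Set Cantor) (hP₀ : IsPerfectSet P₀)
    (f₀ : Cantor → Cantor) (hf₀cont : ContinuousOn f₀ P₀)
    (hf₀inj : Set.InjOn f₀ P₀) (hf₀maps : Set.MapsTo f₀ P₀ P)
    (h hstar : Cantor → Cantor)
    (hhcont : ContinuousOn h P₀) (hhbij : Set.BijOn h P₀ P)
    (hscont : ContinuousOn hstar P₀) (hsbij : Set.BijOn hstar P₀ P)
    (hne : ∀ x ∈ P₀, h x ≠ hstar x) :
    (∃ Q : Set Cantor,
        Q ⊆ {x ∈ P₀ | (h x, f₀ x) ∈ R ∧ h x ≠ f₀ x} ∧ IsPerfectSet Q) ∨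
    (∃ Q : Set Cantor,
        Q ⊆ {x ∈ P₀ | (hstar x, f₀ x) ∈ R ∧ hstar x ≠ f₀ x} ∧ IsPerfectSet Q) := by
  classical
  have hP₀closed : IsClosed P₀ := hP₀.2.closed
  set A : Set Cantor := {x ∈ P₀ | (h x, f₀ x) ∈ R ∧ h x ≠ f₀ x} with hAdef
  set A' : Set Cantor := {x ∈ P₀ | (hstar x, f₀ x) ∈ R ∧ hstar x ≠ f₀ x} with hA'def
  have hAs : BoldfaceSigma (n+2) Cantor A :=
    A_sigma n R hR P₀ hP₀closed h f₀ hhcont hf₀cont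
  have hA's : BoldfaceSigma (n+2) Cantor A' :=
    A_sigma n R hR P₀ hP₀closed hstar f₀ hscont hf₀cont
  rcases hpsp A hAs with hAc | hAp
  swap
  · exact Or.inl hAp
  rcases hpsp A' hA's with hA'c | hA'p
  swap
  · exact Or.inr hA'p
  exfalso
  -- both A and A' are countable: derive a contradiction with the well-ordering
  set ψ : Cantor → Cantor := fun y => Function.invFunOn f₀ P₀ (h y) with hψ
  set ψ' : Cantor → Cantor := fun y => Function.invFunOn f₀ P₀ (hstar y) with hψ'
  set S : ℕ → Set Cantor :=
    fun k => Nat.rec (A ∪ A') (fun _ s => s ∪ ψ '' s ∪ ψ' '' s) k with hS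
  have hSc : ∀ k, (S k).Countable := by
    intro k
    induction k with
    | zero => exact hAc.union hA'c
    | succ k ih => exact (ih.union (ih.image ψ)).union (ih.image ψ')
  set E : Set Cantor := ⋃ k, S k with hE
  have hEc : E.Countable := Set.countable_iUnion hSc
  have hSub : A ∪ A' ⊆ E := Set.subset_iUnion S 0
  have hclose : ∀ x ∈ E, ψ x ∈ E ∧ ψ' x ∈ E := by
    intro x hx
    obtain ⟨k, hk⟩ := Set.mem_iUnion.1 hx
    constructor
    · exact Set.mem_iUnion.2 ⟨k + 1, Or.inl (Or.inr ⟨x, hk, rfl⟩)⟩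
    · exact Set.mem_iUnion.2 ⟨k + 1, Or.inr ⟨x, hk, rfl⟩⟩
  -- P₀ is uncountable
  have hP₀unc : ¬ P₀.Countable := by
    intro hc
    letI : MetricSpace Bool := TopologicalSpace.metrizableSpaceMetric Bool
    letI : MetricSpace Cantor := PiCountable.metricSpace
    obtain ⟨f, hfr, _, hfi⟩ := hP₀.2.exists_nat_bool_injection hP₀.1
    have hrc : (Set.range f).Countable := hc.mono hfr
    haveI := hrc.to_subtype
    have : Countable (ℕ → Bool) := Countable.of_equiv _ (Equiv.ofInjective f hfi).symm
    exact cantor_uncountable this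
  have hPE : (P₀ \ E).Nonempty := by
    rw [Set.nonempty_iff_ne_empty]
    intro hemp
    rw [Set.diff_eq_empty] at hemp
    exact hP₀unc (hEc.mono hemp)
  set W : Set Cantor := f₀ '' (P₀ \ E) with hW
  have hWfield : W ⊆ fieldOf R := by
    rintro w ⟨x, hx, rfl⟩
    exact hPsub (hf₀maps hx.1)
  have hWne : W.Nonempty := hPE.image f₀
  obtain ⟨m, hmW, hmin⟩ := hwo.2.2.2.2 W hWfield hWne
  obtain ⟨x, hxPE, hxm⟩ := hmW
  have hmP : m ∈ P := hxm ▸ hf₀maps hxPE.1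
  have hmfield : m ∈ fieldOf R := hPsub hmP
  -- a point of W strictly below m yields a contradiction with minimality
  have hbelow : ∀ v, v ∈ P₀ \ E → (f₀ v, m) ∈ R → f₀ v ≠ m → False := by
    intro v hv hvR hvne
    have hvW : f₀ v ∈ W := ⟨v, hv, rfl⟩
    exact hvne (hwo.2.1 _ _ hvR (hmin _ hvW))
  -- the h-preimage of m
  obtain ⟨u, huP₀, hum⟩ := hhbij.surjOn hmP
  obtain ⟨u', hu'P₀, hu'm⟩ := hsbij.surjOn hmP
  have huE : u ∉ E := by
    intro huE
    have hx' : ψ u = x := by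
      rw [hψ]
      show Function.invFunOn f₀ P₀ (h u) = x
      rw [hum, ← hxm]
      exact hf₀inj.leftInvOn_invFunOn hxPE.1
    exact hxPE.2 (hx' ▸ (hclose u huE).1)
  have hu'E : u' ∉ E := by
    intro hu'E
    have hx' : ψ' u' = x := by
      rw [hψ']
      show Function.invFunOn f₀ P₀ (hstar u') = x
      rw [hu'm, ← hxm]
      exact hf₀inj.leftInvOn_invFunOn hxPE.1
    exact hxPE.2 (hx' ▸ (hclose u' hu'E).2)
  have huu' : u ≠ u' := by
    intro he
    apply hne u huP₀
    rw [hum, he, hu'm]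
  -- u ∉ A and u' ∉ A'
  have huA : u ∉ A := fun hu => huE (hSub (Or.inl hu))
  have hu'A' : u' ∉ A' := fun hu => hu'E (hSub (Or.inr hu))
  have hfu : f₀ u ∈ fieldOf R := hPsub (hf₀maps huP₀)
  have hfu' : f₀ u' ∈ fieldOf R := hPsub (hf₀maps hu'P₀)
  -- each of f₀ u, f₀ u' is ≤* m
  have hle : ∀ v, v ∈ P₀ → v ∉ A → h v = m → f₀ v = m ∨ (f₀ v, m) ∈ R := by
    intro v hvP₀ hvA hvm
    rcases hwo.2.2.2.1 m hmfield (f₀ v) (hPsub (hf₀maps hvP₀)) with hR1 | hR2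
    · left
      by_contra hne'
      exact hvA ⟨hvP₀, by rw [hvm]; exact hR1, by rw [hvm]; exact fun e => hne' e.symm⟩
    · right; exact hR2
  have hle' : ∀ v, v ∈ P₀ → v ∉ A' → hstar v = m → f₀ v = m ∨ (f₀ v, m) ∈ R := by
    intro v hvP₀ hvA hvm
    rcases hwo.2.2.2.1 m hmfield (f₀ v) (hPsub (hf₀maps hvP₀)) with hR1 | hR2
    · left
      by_contra hne'
      exact hvA ⟨hvP₀, by rw [hvm]; exact hR1, by rw [hvm]; exact fun e => hne' e.symm⟩
    · right; exact hR2
  have hval : f₀ u ≠ f₀ u' := fun he => huu' (hf₀inj huP₀ hu'P₀ he)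
  rcases hle u huP₀ huA hum with hu1 | hu2
  · rcases hle' u' hu'P₀ hu'A' hu'm with hu'1 | hu'2
    · exact hval (hu1.trans hu'1.symm)
    · have hu'ne : f₀ u' ≠ m := fun he => hval (hu1.trans he.symm)
      exact hbelow u' ⟨hu'P₀, hu'E⟩ hu'2 hu'ne
  · by_cases hum2 : f₀ u = m
    · rcases hle' u' hu'P₀ hu'A' hu'm with hu'1 | hu'2
      · exact hval (hum2.trans hu'1.symm)
      · have hu'ne : f₀ u' ≠ m := fun he => hval (hum2.trans he.symm)
        exact hbelow u' ⟨hu'P₀, hu'E⟩ hu'2 hu'ne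
    · exact hbelow u ⟨huP₀, huE⟩ hu2 hum2

end GaleStewart
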